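/- arXiv:math/9807132 — 12 statements merged into one kernel-verified Lean document; each statement's English description precedes it below -/
import Mathlib

section
/- Let A be an n×n complex block matrix [[A11,A12],[A21,A22]] with A11 invertible. Let C1 = [[I, 0],[A21, A22]] and C2 = [[A11, A12],[0, I]]. Then C2 is invertible and ppt(A) = C1·C2⁻¹. -/
/-- the basic factorization `ppt(A) = C1 * C2⁻¹`, where
`C1 = [[I,0],[A21,A22]]` and `C2 = [[A11,A12],[0,I]]`; moreover `C2` is invertible. -/
theorem stmt_3 {k l : Type*} [Fintype k] [Fintype l] [DecidableEq k] [DecidableEq l]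
    (A11 : Matrix k k ℂ) (A12 : Matrix k l ℂ) (A21 : Matrix l k ℂ) (A22 : Matrix l l ℂ)
    (h : IsUnit A11.det) :
    IsUnit (Matrix.fromBlocks A11 A12 (0 : Matrix l k ℂ) (1 : Matrix l l ℂ)).det ∧
    Matrix.fromBlocks A11⁻¹ (-(A11⁻¹ * A12)) (A21 * A11⁻¹) (A22 - A21 * A11⁻¹ * A12)
      = Matrix.fromBlocks (1 : Matrix k k ℂ) (0 : Matrix k l ℂ) A21 A22 *
        (Matrix.fromBlocks A11 A12 (0 : Matrix l k ℂ) (1 : Matrix l l ℂ))⁻¹ := by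
  have hA : IsUnit A11 := (Matrix.isUnit_iff_isUnit_det _).mpr h
  constructor
  · rw [Matrix.det_fromBlocks_zero₂₁]
    simpa using h
  · rw [Matrix.inv_fromBlocks_zero₂₁_of_isUnit_iff A11 A12 1 (by simp [hA]),
      Matrix.fromBlocks_multiply]
    simp [Matrix.mul_sub, sub_eq_neg_add, Matrix.mul_assoc]
end

section
/- Let A be an n×n complex block matrix [[A11,A12],[A21,A22]] with A11 invertible. Then det(ppt(A)) = det(A22) / det(A11). -/
/-!
The Schur complement of the pivot block `A11⁻¹` in `ppt(A)` is `A22` again, so the block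
determinant formula `det [[P, Q], [R, S]] = det P * det (S - R P⁻¹ Q)` gives
`det ppt(A) = det A11⁻¹ * det A22`.
-/

namespace Matrix

variable {k l R : Type*} [Fintype k] [DecidableEq k] [CommRing R]

noncomputable def principalPivot (A11 : Matrix k k R) (A12 : Matrix k l R) (A21 : Matrix l k R)
    (A22 : Matrix l l R) : Matrix (k ⊕ l) (k ⊕ l) R :=
  fromBlocks A11⁻¹ (-(A11⁻¹ * A12)) (A21 * A11⁻¹) (A22 - A21 * A11⁻¹ * A12)

theorem schur_complement_principalPivot (A11 : Matrix k k R) (A12 : Matrix k l R)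
    (A21 : Matrix l k R) (A22 : Matrix l l R) (h : IsUnit A11.det) :
    A22 - A21 * A11⁻¹ * A12 - A21 * A11⁻¹ * A11⁻¹⁻¹ * -(A11⁻¹ * A12) = A22 := by
  have hcancel : A21 * A11⁻¹ * A11⁻¹⁻¹ * (A11⁻¹ * A12) = A21 * A11⁻¹ * A12 := by
    rw [nonsing_inv_nonsing_inv _ h, Matrix.mul_assoc (A21 * A11⁻¹), ← Matrix.mul_assoc A11,
      mul_nonsing_inv _ h, Matrix.one_mul]
  rw [Matrix.mul_neg, hcancel, sub_neg_eq_add, sub_add_cancel]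

theorem det_principalPivot [Fintype l] [DecidableEq l] (A11 : Matrix k k R) (A12 : Matrix k l R)
    (A21 : Matrix l k R) (A22 : Matrix l l R) (h : IsUnit A11.det) :
    (principalPivot A11 A12 A21 A22).det = A11⁻¹.det * A22.det := by
  let _ : Invertible A11⁻¹ := invertibleOfIsUnitDet _ ((isUnit_nonsing_inv_det_iff).2 h)
  rw [principalPivot, det_fromBlocks₁₁, invOf_eq_nonsing_inv,
    schur_complement_principalPivot A11 A12 A21 A22 h]

end Matrix

/-- `det (ppt A) = det A22 / det A11`. -/
theorem stmt_4 {k l : Type*} [Fintype k] [Fintype l] [DecidableEq k] [DecidableEq l]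
    (A11 : Matrix k k ℂ) (A12 : Matrix k l ℂ) (A21 : Matrix l k ℂ) (A22 : Matrix l l ℂ)
    (h : IsUnit A11.det) :
    (Matrix.fromBlocks A11⁻¹ (-(A11⁻¹ * A12)) (A21 * A11⁻¹)
        (A22 - A21 * A11⁻¹ * A12)).det = A22.det / A11.det := by
  rw [← Matrix.principalPivot, Matrix.det_principalPivot A11 A12 A21 A22 h,
    Matrix.det_nonsing_inv, Ring.inverse_eq_inv', div_eq_inv_mul]
end

section
/- Let A be an n×n complex block matrix [[A11,A12],[A21,A22]] with both A11 and A22 invertible. Then ppt(A) relative to the first block is invertible, and its inverse equals the principal pivot transform of A relative to the complementary block, i.e. (ppt(A, α))⁻¹ = ppt(A, αᶜ). -/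
/-!
Multiplying the two transforms block by block, every entry collapses to `1` or `0` using only
`A₁₁⁻¹ A₁₁ = 1` and `A₂₂ A₂₂⁻¹ = 1`; a one-sided inverse of a square matrix is its inverse.
-/

namespace Matrix

variable {k l R : Type*} [Fintype k] [Fintype l] [DecidableEq k] [DecidableEq l] [CommRing R]
  (A11 : Matrix k k R) (A12 : Matrix k l R) (A21 : Matrix l k R) (A22 : Matrix l l R)

/-- `ppt(A, α)` for `A = fromBlocks A11 A12 A21 A22`, with `α` the first block. -/
noncomputable def pptFst : Matrix (k ⊕ l) (k ⊕ l) R :=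
  fromBlocks A11⁻¹ (-(A11⁻¹ * A12)) (A21 * A11⁻¹) (A22 - A21 * A11⁻¹ * A12)

/-- `ppt(A, αᶜ)`, the pivot on the second block. -/
noncomputable def pptSnd : Matrix (k ⊕ l) (k ⊕ l) R :=
  fromBlocks (A11 - A12 * A22⁻¹ * A21) (A12 * A22⁻¹) (-(A22⁻¹ * A21)) A22⁻¹

variable {A11 A22}

theorem pptFst_mul_pptSnd (h11 : IsUnit A11.det) (h22 : IsUnit A22.det) :
    pptFst A11 A12 A21 A22 * pptSnd A11 A12 A21 A22 = 1 := by
  have hi11 : A11⁻¹ * A11 = 1 := nonsing_inv_mul A11 h11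
  have hi22 : A22 * A22⁻¹ = 1 := mul_nonsing_inv A22 h22
  have hi22' : A22 * (A22⁻¹ * A21) = A21 := by rw [← Matrix.mul_assoc, hi22, Matrix.one_mul]
  rw [pptFst, pptSnd, fromBlocks_multiply, ← fromBlocks_one]
  congr 1 <;>
    simp only [Matrix.mul_sub, Matrix.sub_mul, Matrix.neg_mul, Matrix.mul_neg, neg_neg,
      Matrix.mul_assoc, hi11, hi22, hi22', Matrix.mul_one] <;>
    abel

theorem isUnit_det_pptFst (h11 : IsUnit A11.det) (h22 : IsUnit A22.det) :
    IsUnit (pptFst A11 A12 A21 A22).det :=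
  isUnit_det_of_right_inverse (pptFst_mul_pptSnd A12 A21 h11 h22)

theorem inv_pptFst (h11 : IsUnit A11.det) (h22 : IsUnit A22.det) :
    (pptFst A11 A12 A21 A22)⁻¹ = pptSnd A11 A12 A21 A22 :=
  inv_eq_right_inv (pptFst_mul_pptSnd A12 A21 h11 h22)

end Matrix

/-- if both diagonal blocks are invertible then `ppt(A, α)` is
invertible and `(ppt(A, α))⁻¹ = ppt(A, αᶜ)`. -/
theorem stmt_5 {k l : Type*} [Fintype k] [Fintype l] [DecidableEq k] [DecidableEq l]
    (A11 : Matrix k k ℂ) (A12 : Matrix k l ℂ) (A21 : Matrix l k ℂ) (A22 : Matrix l l ℂ)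
    (h11 : IsUnit A11.det) (h22 : IsUnit A22.det) :
    IsUnit (Matrix.fromBlocks A11⁻¹ (-(A11⁻¹ * A12)) (A21 * A11⁻¹)
        (A22 - A21 * A11⁻¹ * A12)).det ∧
    (Matrix.fromBlocks A11⁻¹ (-(A11⁻¹ * A12)) (A21 * A11⁻¹)
        (A22 - A21 * A11⁻¹ * A12))⁻¹
      = Matrix.fromBlocks (A11 - A12 * A22⁻¹ * A21) (A12 * A22⁻¹)
          (-(A22⁻¹ * A21)) A22⁻¹ :=
  ⟨Matrix.isUnit_det_pptFst A12 A21 h11 h22, Matrix.inv_pptFst A12 A21 h11 h22⟩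
end

section
/- Let A be an n×n complex matrix and suppose both the principal pivot transforms ppt(A, α) relative to a block and then ppt(·, αᶜ) relative to the complementary block are defined (i.e., A11 is invertible and the (2,2) block of ppt(A,α), which is the Schur complement A/A11, is invertible). Then A is invertible and ppt(ppt(A, α), αᶜ) = A⁻¹. -/
/-- pivoting first on the leading block and then on the
complementary block of the result yields the inverse of `A` (in particular `A`
is invertible). Here `B = ppt(A, α)` has blocks `B11 = A11⁻¹`,
`B12 = -A11⁻¹A12`, `B21 = A21A11⁻¹`, `B22 = A22 - A21A11⁻¹A12`, and
`ppt(B, αᶜ) = [[B11 - B12 B22⁻¹ B21, B12 B22⁻¹], [-B22⁻¹ B21, B22⁻¹]]`. -/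
theorem stmt_6 {k l : Type*} [Fintype k] [Fintype l] [DecidableEq k] [DecidableEq l]
    (A11 : Matrix k k ℂ) (A12 : Matrix k l ℂ) (A21 : Matrix l k ℂ) (A22 : Matrix l l ℂ)
    (h11 : IsUnit A11.det) (hS : IsUnit (A22 - A21 * A11⁻¹ * A12).det) :
    IsUnit (Matrix.fromBlocks A11 A12 A21 A22).det ∧
    Matrix.fromBlocks
        (A11⁻¹ - (-(A11⁻¹ * A12)) * (A22 - A21 * A11⁻¹ * A12)⁻¹ * (A21 * A11⁻¹))
        ((-(A11⁻¹ * A12)) * (A22 - A21 * A11⁻¹ * A12)⁻¹)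
        (-((A22 - A21 * A11⁻¹ * A12)⁻¹ * (A21 * A11⁻¹)))
        ((A22 - A21 * A11⁻¹ * A12)⁻¹)
      = (Matrix.fromBlocks A11 A12 A21 A22)⁻¹ := by
  letI i11 : Invertible A11 := A11.invertibleOfIsUnitDet h11
  letI iS : Invertible (A22 - A21 * A11⁻¹ * A12) := (A22 - A21 * A11⁻¹ * A12).invertibleOfIsUnitDet hS
  have hinv : (⅟A11 : Matrix k k ℂ) = A11⁻¹ := Matrix.invOf_eq_nonsing_inv A11
  letI iS' : Invertible (A22 - A21 * ⅟A11 * A12) := by rw [hinv]; exact iS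
  have hdet : IsUnit (Matrix.fromBlocks A11 A12 A21 A22).det := by
    rw [Matrix.det_fromBlocks₁₁, hinv]
    exact h11.mul hS
  refine ⟨hdet, ?_⟩
  letI iF : Invertible (Matrix.fromBlocks A11 A12 A21 A22) := (Matrix.fromBlocks A11 A12 A21 A22).invertibleOfIsUnitDet hdet
  have := Matrix.invOf_fromBlocks₁₁_eq A11 A12 A21 A22
  rw [Matrix.invOf_eq_nonsing_inv] at this
  simp only [Matrix.invOf_eq_nonsing_inv] at this
  rw [this]
  simp only [Matrix.neg_mul, sub_neg_eq_add, Matrix.mul_assoc]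
end

section
/- Let A be an n×n complex block matrix with A11 invertible, B = ppt(A), and let λ be a nonzero complex number. Then λ is an eigenvalue of B if and only if the matrix A − D is singular, where D is the diagonal matrix whose diagonal entries are λ⁻¹ on the indices of the pivot block and λ on the remaining indices. -/
/-!
With `L = [[-A₁₁, 0], [-A₂₁, 1]]` one checks blockwise that
`A - D = L * (ppt(A) - λ) * diag(λ⁻¹, 1)`. Both outer factors are invertible (`A₁₁` is, and
`λ ≠ 0`), so `A - D` is singular exactly when `ppt(A) - λ` is, i.e. when `λ` is an eigenvalue
of `ppt(A)`.
-/

namespace Matrix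

theorem fromBlocks_sub {m n o p α : Type*} [Sub α]
    (A : Matrix n m α) (B : Matrix n o α) (C : Matrix p m α) (D : Matrix p o α)
    (A' : Matrix n m α) (B' : Matrix n o α) (C' : Matrix p m α) (D' : Matrix p o α) :
    fromBlocks A B C D - fromBlocks A' B' C' D' =
      fromBlocks (A - A') (B - B') (C - C') (D - D') := by
  ext (i | i) (j | j) <;> rfl

theorem exists_mulVec_eq_smul_iff_det_sub_eq_zero {n R : Type*} [Fintype n] [DecidableEq n]
    [CommRing R] [IsDomain R] (M : Matrix n n R) (μ : R) :
    (∃ v ≠ 0, M *ᵥ v = μ • v) ↔ (M - μ • 1).det = 0 := by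
  simp only [← exists_mulVec_eq_zero_iff, sub_mulVec, smul_mulVec, one_mulVec, sub_eq_zero]

variable {k l K : Type*} [Fintype k] [Fintype l] [DecidableEq k] [Field K]

noncomputable def principalPivotTransform (A11 : Matrix k k K) (A12 : Matrix k l K)
    (A21 : Matrix l k K) (A22 : Matrix l l K) : Matrix (k ⊕ l) (k ⊕ l) K :=
  fromBlocks A11⁻¹ (-(A11⁻¹ * A12)) (A21 * A11⁻¹) (A22 - A21 * A11⁻¹ * A12)

variable [DecidableEq l] {A11 : Matrix k k K} {A12 : Matrix k l K} {A21 : Matrix l k K}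
  {A22 : Matrix l l K} {lam : K}

theorem fromBlocks_sub_fromBlocks_smul_one_eq (h : IsUnit A11.det) (hlam : lam ≠ 0) :
    fromBlocks A11 A12 A21 A22 - fromBlocks (lam⁻¹ • 1) 0 0 (lam • 1) =
      fromBlocks (-A11) 0 (-A21) 1 * (principalPivotTransform A11 A12 A21 A22 - lam • 1) *
        fromBlocks (lam⁻¹ • 1) 0 0 1 := by
  have hA : A11 * A11⁻¹ = 1 := mul_nonsing_inv _ h
  rw [principalPivotTransform, ← fromBlocks_one, fromBlocks_smul, fromBlocks_sub, fromBlocks_sub,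
    fromBlocks_multiply, fromBlocks_multiply]
  refine fromBlocks_inj.mpr ⟨?_, ?_, ?_, ?_⟩ <;>
    simp only [Matrix.mul_zero, Matrix.zero_mul, Matrix.mul_one, Matrix.one_mul, add_zero,
      zero_add, sub_zero, zero_sub, Matrix.mul_smul, Matrix.mul_sub, Matrix.mul_neg,
      Matrix.neg_mul, ← Matrix.mul_assoc, hA, neg_neg] <;>
    match_scalars <;> field_simp <;> ring

theorem det_principalPivotTransform_sub_smul_eq_zero_iff (h : IsUnit A11.det) (hlam : lam ≠ 0) :
    (principalPivotTransform A11 A12 A21 A22 - lam • 1).det = 0 ↔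
      (fromBlocks A11 A12 A21 A22 - fromBlocks (lam⁻¹ • 1) 0 0 (lam • 1)).det = 0 := by
  rw [fromBlocks_sub_fromBlocks_smul_one_eq h hlam, det_mul, det_mul, det_fromBlocks_zero₁₂,
    det_fromBlocks_zero₁₂, det_neg, det_smul, det_one, det_one]
  simp [h.ne_zero, hlam]

end Matrix

/-- a nonzero `λ` is an eigenvalue of `B = ppt(A)` iff `A - D` is
singular, where `D = diag(λ⁻¹ I_k, λ I_{n-k})`. -/
theorem stmt_7 {k l : Type*} [Fintype k] [Fintype l] [DecidableEq k] [DecidableEq l]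
    (A11 : Matrix k k ℂ) (A12 : Matrix k l ℂ) (A21 : Matrix l k ℂ) (A22 : Matrix l l ℂ)
    (h : IsUnit A11.det) (lam : ℂ) (hlam : lam ≠ 0) :
    (∃ v : (k ⊕ l) → ℂ, v ≠ 0 ∧
        (Matrix.fromBlocks A11⁻¹ (-(A11⁻¹ * A12)) (A21 * A11⁻¹)
            (A22 - A21 * A11⁻¹ * A12)).mulVec v = lam • v) ↔
    (Matrix.fromBlocks A11 A12 A21 A22 -
        Matrix.fromBlocks (lam⁻¹ • (1 : Matrix k k ℂ)) 0 0
          (lam • (1 : Matrix l l ℂ))).det = 0 :=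
  (Matrix.exists_mulVec_eq_smul_iff_det_sub_eq_zero _ lam).trans
    (Matrix.det_principalPivotTransform_sub_smul_eq_zero_iff h hlam)
end

section
/- Let A be an n×n complex block matrix with A11 invertible and B = ppt(A). Then 1 is an eigenvalue of B if and only if 1 is an eigenvalue of A, and −1 is an eigenvalue of B if and only if −1 is an eigenvalue of A. -/
open Matrix

lemma ppt_eig_aux {k l : Type*} [Fintype k] [Fintype l] [DecidableEq k] [DecidableEq l]
    (A11 : Matrix k k ℂ) (A12 : Matrix k l ℂ) (A21 : Matrix l k ℂ) (A22 : Matrix l l ℂ)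
    (h : IsUnit A11.det) (μ : ℂ) (hμ : μ * μ = 1)
    (hex : ∃ v : (k ⊕ l) → ℂ, v ≠ 0 ∧
      (Matrix.fromBlocks A11⁻¹ (-(A11⁻¹ * A12)) (A21 * A11⁻¹)
          (A22 - A21 * A11⁻¹ * A12)).mulVec v = μ • v) :
    ∃ v : (k ⊕ l) → ℂ, v ≠ 0 ∧
      (Matrix.fromBlocks A11 A12 A21 A22).mulVec v = μ • v := by
  obtain ⟨v, hv0, hv⟩ := hex
  have hμ0 : μ ≠ 0 := by
    intro h0; rw [h0, mul_zero] at hμ; exact zero_ne_one hμ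
  set x : k → ℂ := fun i => v (Sum.inl i) with hx
  set y : l → ℂ := fun j => v (Sum.inr j) with hy
  have hvelim : v = Sum.elim x y := by funext i; cases i <;> rfl
  rw [hvelim, Matrix.fromBlocks_mulVec] at hv
  have e1 : A11⁻¹.mulVec x + (-(A11⁻¹ * A12)).mulVec y = μ • x := by
    funext i; exact congrFun hv (Sum.inl i)
  have e2 : (A21 * A11⁻¹).mulVec x + (A22 - A21 * A11⁻¹ * A12).mulVec y = μ • y := by
    funext j; exact congrFun hv (Sum.inr j)
  -- rewrite e1 as : A11⁻¹.mulVec (x - A12.mulVec y) = μ • x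
  have e1' : A11⁻¹.mulVec (x - A12.mulVec y) = μ • x := by
    rw [Matrix.mulVec_sub, ← e1, Matrix.neg_mulVec, ← Matrix.mulVec_mulVec]
    ring_nf
  -- apply A11 to get : x - A12.mulVec y = μ • A11.mulVec x
  have e1'' : x - A12.mulVec y = μ • A11.mulVec x := by
    have := congrArg A11.mulVec e1'
    rwa [Matrix.mulVec_mulVec, Matrix.mul_nonsing_inv _ h, Matrix.one_mulVec,
      Matrix.mulVec_smul] at this
  refine ⟨Sum.elim (μ • x) y, ?_, ?_⟩
  · intro hz
    apply hv0
    have hxy : μ • x = 0 ∧ y = 0 := by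
      constructor
      · funext i; exact congrFun hz (Sum.inl i)
      · funext j; exact congrFun hz (Sum.inr j)
    have hx0 : x = 0 := by
      have := hxy.1
      have : μ • (μ • x) = 0 := by rw [this, smul_zero]
      rwa [smul_smul, hμ, one_smul] at this
    rw [hvelim, hx0, hxy.2]
    funext i; cases i <;> rfl
  · rw [Matrix.fromBlocks_mulVec]
    have g1 : A11.mulVec (μ • x) + A12.mulVec y = μ • (μ • x) := by
      rw [smul_smul, hμ, one_smul, Matrix.mulVec_smul]
      have := e1''
      linear_combination (norm := module) -this
    have g2 : A21.mulVec (μ • x) + A22.mulVec y = μ • y := by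
      -- from e1': A21.mulVec (A11⁻¹.mulVec (x - A12.mulVec y)) = A21.mulVec (μ • x)
      have h1 : (A21 * A11⁻¹).mulVec (x - A12.mulVec y) = μ • A21.mulVec x := by
        rw [← Matrix.mulVec_mulVec, e1', Matrix.mulVec_smul]
      -- e2 : (A21*A11⁻¹).mulVec x + (A22 - A21*A11⁻¹*A12).mulVec y = μ • y
      rw [Matrix.mulVec_sub] at h1
      rw [Matrix.sub_mulVec, ← Matrix.mulVec_mulVec y (A21 * A11⁻¹) A12] at e2
      rw [Matrix.mulVec_smul]
      linear_combination (norm := module) e2 - h1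
    funext i
    cases i with
    | inl i => simpa using congrFun g1 i
    | inr j => simpa using congrFun g2 j

/-- `1` (resp. `-1`) is an eigenvalue of `ppt(A)` iff it is an
eigenvalue of `A`. -/
theorem stmt_8 {k l : Type*} [Fintype k] [Fintype l] [DecidableEq k] [DecidableEq l]
    (A11 : Matrix k k ℂ) (A12 : Matrix k l ℂ) (A21 : Matrix l k ℂ) (A22 : Matrix l l ℂ)
    (h : IsUnit A11.det) :
    ((∃ v : (k ⊕ l) → ℂ, v ≠ 0 ∧
        (Matrix.fromBlocks A11⁻¹ (-(A11⁻¹ * A12)) (A21 * A11⁻¹)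
            (A22 - A21 * A11⁻¹ * A12)).mulVec v = (1 : ℂ) • v) ↔
      (∃ v : (k ⊕ l) → ℂ, v ≠ 0 ∧
        (Matrix.fromBlocks A11 A12 A21 A22).mulVec v = (1 : ℂ) • v)) ∧
    ((∃ v : (k ⊕ l) → ℂ, v ≠ 0 ∧
        (Matrix.fromBlocks A11⁻¹ (-(A11⁻¹ * A12)) (A21 * A11⁻¹)
            (A22 - A21 * A11⁻¹ * A12)).mulVec v = (-1 : ℂ) • v) ↔
      (∃ v : (k ⊕ l) → ℂ, v ≠ 0 ∧
        (Matrix.fromBlocks A11 A12 A21 A22).mulVec v = (-1 : ℂ) • v)) := by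
  have hinv : IsUnit (A11⁻¹).det := Matrix.isUnit_nonsing_inv_det A11 h
  have hppt : Matrix.fromBlocks (A11⁻¹)⁻¹ (-((A11⁻¹)⁻¹ * -(A11⁻¹ * A12)))
      ((A21 * A11⁻¹) * (A11⁻¹)⁻¹)
      ((A22 - A21 * A11⁻¹ * A12) - (A21 * A11⁻¹) * (A11⁻¹)⁻¹ * -(A11⁻¹ * A12))
      = Matrix.fromBlocks A11 A12 A21 A22 := by
    rw [Matrix.nonsing_inv_nonsing_inv A11 h]
    rw [Matrix.mul_neg, Matrix.mul_nonsing_inv_cancel_left _ _ h, neg_neg,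
      Matrix.nonsing_inv_mul_cancel_right _ _ h, Matrix.mul_neg,
      ← Matrix.mul_assoc, sub_neg_eq_add, sub_add_cancel]
  constructor <;> constructor
  · exact ppt_eig_aux A11 A12 A21 A22 h 1 (by norm_num)
  · intro hex
    exact ppt_eig_aux A11⁻¹ (-(A11⁻¹ * A12)) (A21 * A11⁻¹) (A22 - A21 * A11⁻¹ * A12)
      hinv 1 (by norm_num) (by rw [hppt]; exact hex)
  · exact ppt_eig_aux A11 A12 A21 A22 h (-1) (by norm_num)
  · intro hex
    exact ppt_eig_aux A11⁻¹ (-(A11⁻¹ * A12)) (A21 * A11⁻¹) (A22 - A21 * A11⁻¹ * A12)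
      hinv (-1) (by norm_num) (by rw [hppt]; exact hex)
end

section
/- If A is an n×n complex P-matrix (all principal minors have positive real part equal to their value, i.e., all principal minors are positive reals), then A is invertible and A⁻¹ is also a P-matrix. -/
/-!
Jacobi's complementary minor identity: if `A * B = 1`, then for every index set `α`,
`det A * det B[α] = det A[αᶜ]`. It follows from taking determinants in
`A * [[B[α,α], 0], [B[αᶜ,α], 1]] = [[1, A[α,αᶜ]], [0, A[αᶜ,αᶜ]]]`.
For a P-matrix `A` this makes `det A > 0`, so `A` is invertible, and every principal minor
of `A⁻¹` is the quotient `det A[αᶜ] / det A` of two positive reals.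
-/

/-- A complex matrix is a P-matrix if every principal minor is a positive real
number. -/
def IsPMatrix {ι : Type*} [Fintype ι] [DecidableEq ι] (A : Matrix ι ι ℂ) : Prop :=
  ∀ α : Finset ι, α.Nonempty →
    ∃ r : ℝ, 0 < r ∧
      (A.submatrix (fun i : {x // x ∈ α} => (i : ι))
        (fun i : {x // x ∈ α} => (i : ι))).det = (r : ℂ)

namespace Matrix

variable {R ι m n : Type*} [CommRing R]

theorem det_mul_det_toBlocks₁₁_of_mul_eq_one [Fintype m] [DecidableEq m]
    [Fintype n] [DecidableEq n] {M N : Matrix (m ⊕ n) (m ⊕ n) R} (h : M * N = 1) :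
    M.det * N.toBlocks₁₁.det = M.toBlocks₂₂.det := by
  have hblocks : M * fromBlocks N.toBlocks₁₁ 0 N.toBlocks₂₁ 1 =
      fromBlocks 1 M.toBlocks₁₂ 0 M.toBlocks₂₂ := by
    rw [← fromBlocks_toBlocks M, ← fromBlocks_toBlocks N, fromBlocks_multiply,
      ← fromBlocks_one] at h
    obtain ⟨h₁₁, -, h₂₁, -⟩ := fromBlocks_inj.mp h
    rw [← fromBlocks_toBlocks M, fromBlocks_multiply]
    simp [h₁₁, h₂₁]
  simpa [det_fromBlocks_zero₁₂, det_fromBlocks_zero₂₁] using congrArg det hblocks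

theorem det_mul_det_submatrix_of_mul_eq_one [Fintype ι] [DecidableEq ι] {A B : Matrix ι ι R}
    (h : A * B = 1) (α : Finset ι) :
    A.det * (B.submatrix ((↑) : α → ι) (↑)).det = (A.submatrix ((↑) : ↥αᶜ → ι) (↑)).det := by
  let e : α ⊕ ↥αᶜ ≃ ι :=
    (Equiv.sumCongr (Equiv.refl _) (Equiv.subtypeEquivRight fun _ => Finset.mem_compl)).trans
      (Equiv.sumCompl (· ∈ α))
  have hblocks := det_mul_det_toBlocks₁₁_of_mul_eq_one (M := A.submatrix e e)
    (N := B.submatrix e e) (by rw [submatrix_mul_equiv, h, submatrix_one_equiv])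
  rwa [det_submatrix_equiv_self] at hblocks

end Matrix

namespace IsPMatrix

variable {ι : Type*} [Fintype ι] [DecidableEq ι] {A : Matrix ι ι ℂ}

theorem exists_pos_det_submatrix (hA : IsPMatrix A) (α : Finset ι) :
    ∃ r : ℝ, 0 < r ∧ (A.submatrix ((↑) : α → ι) (↑)).det = r := by
  rcases α.eq_empty_or_nonempty with rfl | hα
  · exact ⟨1, one_pos, by simp⟩
  · exact hA α hα

theorem exists_pos_det (hA : IsPMatrix A) : ∃ r : ℝ, 0 < r ∧ A.det = r := by
  obtain ⟨r, hr, hdet⟩ := hA.exists_pos_det_submatrix Finset.univ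
  exact ⟨r, hr,
    (Matrix.det_submatrix_equiv_self (Equiv.subtypeUnivEquiv Finset.mem_univ) A).symm.trans hdet⟩

end IsPMatrix

/-- a complex P-matrix is invertible and its inverse is a
P-matrix. -/
theorem stmt_11 {n : ℕ} (A : Matrix (Fin n) (Fin n) ℂ) (hA : IsPMatrix A) :
    IsUnit A.det ∧ IsPMatrix A⁻¹ := by
  obtain ⟨r, hr, hdet⟩ := hA.exists_pos_det
  have hunit : IsUnit A.det := hdet ▸ (Complex.ofReal_ne_zero.mpr hr.ne').isUnit
  refine ⟨hunit, fun α _ => ?_⟩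
  obtain ⟨s, hs, hcompl⟩ := hA.exists_pos_det_submatrix αᶜ
  have hjacobi := Matrix.det_mul_det_submatrix_of_mul_eq_one (A.mul_nonsing_inv hunit) α
  rw [hdet, hcompl] at hjacobi
  refine ⟨s / r, div_pos hs hr, ?_⟩
  rw [Complex.ofReal_div, ← hjacobi, mul_div_cancel_left₀ _ (Complex.ofReal_ne_zero.mpr hr.ne')]
end

section
/- If A is an n×n complex P-matrix and α ⊆ {1,…,n}, then the Schur complement A/A[α] = A(α) − A(α,α]·A[α]⁻¹·A[α,α) is a P-matrix. -/
open Matrix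

namespace Matrix

variable {ι m p q R : Type*}

theorem submatrix_sumElim (A : Matrix ι ι R) (f : m → ι) (g : p → ι) :
    A.submatrix (Sum.elim f g) (Sum.elim f g) =
      fromBlocks (A.submatrix f f) (A.submatrix f g) (A.submatrix g f) (A.submatrix g g) := by
  ext (i | i) (j | j) <;> rfl

theorem det_submatrix_sumElim [CommRing R] [Fintype m] [DecidableEq m] [Fintype p]
    [DecidableEq p] (A : Matrix ι ι R) (f : m → ι) (g : p → ι)
    [Invertible (A.submatrix f f)] :
    (A.submatrix (Sum.elim f g) (Sum.elim f g)).det =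
      (A.submatrix f f).det *
        (A.submatrix g g - A.submatrix g f * (A.submatrix f f)⁻¹ * A.submatrix f g).det := by
  rw [submatrix_sumElim, det_fromBlocks₁₁, invOf_eq_nonsing_inv]

theorem submatrix_schur_comp [Ring R] [Fintype m] (A : Matrix ι ι R) (f : m → ι) (g : p → ι)
    (h : q → p) (X : Matrix m m R) :
    (A.submatrix g g - A.submatrix g f * X * A.submatrix f g).submatrix h h =
      A.submatrix (g ∘ h) (g ∘ h) - A.submatrix (g ∘ h) f * X * A.submatrix f (g ∘ h) :=
  rfl

end Matrix

theorem IsPMatrix.exists_det_submatrix_embedding {ι : Type*} [Fintype ι] [DecidableEq ι]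
    {A : Matrix ι ι ℂ} (hA : IsPMatrix A) {m : Type*} [Fintype m] [DecidableEq m]
    (e : m ↪ ι) : ∃ r : ℝ, 0 < r ∧ (A.submatrix e e).det = r := by
  rcases isEmpty_or_nonempty m with hm | hm
  · exact ⟨1, one_pos, by simp [det_isEmpty]⟩
  let s := Finset.univ.map e
  let e' : m ≃ s :=
    Equiv.ofBijective (fun x => ⟨e x, Finset.mem_map_of_mem e (Finset.mem_univ x)⟩)
      ⟨fun x y h => e.injective (congrArg Subtype.val h), fun ⟨y, hy⟩ => by
        obtain ⟨x, -, rfl⟩ := Finset.mem_map.1 hy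
        exact ⟨x, rfl⟩⟩
  obtain ⟨r, hr, hdet⟩ := hA s Finset.univ_nonempty.map
  exact ⟨r, hr, by rw [← hdet, ← det_submatrix_equiv_self e']; rfl⟩

/-- the Schur complement `A/A[α] = A(α) - A(α,α] A[α]⁻¹ A[α,α)`
of a P-matrix is a P-matrix. -/
theorem stmt_12 {n : ℕ} (A : Matrix (Fin n) (Fin n) ℂ) (hA : IsPMatrix A)
    (α : Finset (Fin n)) :
    IsPMatrix
      (A.submatrix (fun i : {x // x ∈ αᶜ} => (i : Fin n))
          (fun i : {x // x ∈ αᶜ} => (i : Fin n)) -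
        A.submatrix (fun i : {x // x ∈ αᶜ} => (i : Fin n))
            (fun i : {x // x ∈ α} => (i : Fin n)) *
          (A.submatrix (fun i : {x // x ∈ α} => (i : Fin n))
            (fun i : {x // x ∈ α} => (i : Fin n)))⁻¹ *
          A.submatrix (fun i : {x // x ∈ α} => (i : Fin n))
            (fun i : {x // x ∈ αᶜ} => (i : Fin n))) := by
  intro β _
  let f : α → Fin n := (↑)
  let g : {x // x ∈ αᶜ} → Fin n := (↑)
  have hfg : Function.Injective (Sum.elim f (g ∘ (↑) : β → Fin n)) := by
    refine Function.Injective.sumElim Subtype.val_injective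
      (Subtype.val_injective.comp Subtype.val_injective) fun a b h => ?_
    have hab : (a : Fin n) = ((b : {x // x ∈ αᶜ}) : Fin n) := h
    exact Finset.mem_compl.1 (b : {x // x ∈ αᶜ}).2 (hab ▸ a.2)
  obtain ⟨ra, hra, hdeta⟩ := hA.exists_det_submatrix_embedding ⟨f, Subtype.val_injective⟩
  obtain ⟨rb, hrb, hdetb⟩ := hA.exists_det_submatrix_embedding ⟨_, hfg⟩
  simp only [Function.Embedding.coeFn_mk] at hdeta hdetb
  have : Invertible (A.submatrix f f) :=
    (A.submatrix f f).invertibleOfIsUnitDet (by simpa [hdeta] using hra.ne')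
  have hschur := (det_submatrix_sumElim A f _).symm.trans hdetb
  rw [hdeta] at hschur
  refine ⟨rb / ra, div_pos hrb hra, ?_⟩
  rw [submatrix_schur_comp A f g, Complex.ofReal_div, ← hschur,
    mul_div_cancel_left₀ _ (Complex.ofReal_ne_zero.2 hra.ne')]
end

section
/- If A is an n×n complex P-matrix written in block form [[A11,A12],[A21,A22]] (so A11 is invertible), then the principal pivot transform ppt(A) = [[A11⁻¹, -A11⁻¹A12],[A21A11⁻¹, A22 - A21A11⁻¹A12]] is also a P-matrix. -/
open Matrix

/-- Key determinant identity for the principal pivot transform (Tucker's identity):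
the product of a principal minor of the ppt with `det A` equals the complementary-swapped
principal minor of the original matrix. -/
theorem ppt_key {a a' b : Type*} [Fintype a] [Fintype a'] [Fintype b]
    [DecidableEq a] [DecidableEq a'] [DecidableEq b]
    (A : Matrix (a ⊕ a') (a ⊕ a') ℂ) (U : Matrix (a ⊕ a') b ℂ)
    (V : Matrix b (a ⊕ a') ℂ) (L : Matrix b b ℂ) (h : IsUnit A.det) :
    (Matrix.fromBlocks (A⁻¹.submatrix Sum.inl Sum.inl) ((-(A⁻¹ * U)).submatrix Sum.inl id)
      ((V * A⁻¹).submatrix id Sum.inl) (L - V * A⁻¹ * U)).det * A.det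
    = (Matrix.fromBlocks (A.submatrix Sum.inr Sum.inr) (U.submatrix Sum.inr id)
      (V.submatrix id Sum.inr) L).det := by
  classical
  set Q : Matrix ((a ⊕ a') ⊕ b) ((a ⊕ a') ⊕ b) ℂ :=
    Matrix.fromBlocks A⁻¹ (-(A⁻¹ * U)) (V * A⁻¹) (L - V * A⁻¹ * U) with hQ
  set S0 : Matrix ((a ⊕ a') ⊕ b) ((a ⊕ a') ⊕ b) ℂ :=
    Matrix.fromBlocks A U 0 1 with hS0
  set T0 : Matrix ((a ⊕ a') ⊕ b) ((a ⊕ a') ⊕ b) ℂ :=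
    Matrix.fromBlocks 1 0 V L with hT0
  have hQS : Q * S0 = T0 := by
    rw [hQ, hS0, hT0, Matrix.fromBlocks_multiply, Matrix.mul_zero, Matrix.mul_zero,
      Matrix.mul_one, Matrix.mul_one, add_zero, add_zero, Matrix.nonsing_inv_mul _ h,
      Matrix.mul_assoc V, Matrix.nonsing_inv_mul _ h, Matrix.mul_one, add_neg_cancel,
      add_sub_cancel]
  set Qt : Matrix ((a ⊕ a') ⊕ b) ((a ⊕ a') ⊕ b) ℂ :=
    Matrix.of fun i j =>
      Sum.elim
        (Sum.elim (fun s => Q (.inl (.inl s)) j)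
          (fun s => (1 : Matrix ((a ⊕ a') ⊕ b) ((a ⊕ a') ⊕ b) ℂ) (.inl (.inr s)) j))
        (fun s => Q (.inr s) j) i with hQt
  set R0 : Matrix ((a ⊕ a') ⊕ b) ((a ⊕ a') ⊕ b) ℂ :=
    Matrix.of fun i j =>
      Sum.elim
        (Sum.elim (fun s => T0 (.inl (.inl s)) j) (fun s => S0 (.inl (.inr s)) j))
        (fun s => T0 (.inr s) j) i with hR0
  have hQtS : Qt * S0 = R0 := by
    ext i j
    rcases i with (s | s) | s
    · have := congrFun (congrFun hQS (.inl (.inl s))) j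
      simpa [Matrix.mul_apply, hQt, hR0] using this
    · have := congrFun (congrFun (Matrix.one_mul S0) (.inl (.inr s))) j
      simpa [Matrix.mul_apply, hQt, hR0] using this
    · have := congrFun (congrFun hQS (.inr s)) j
      simpa [Matrix.mul_apply, hQt, hR0] using this
  set σ : a' ⊕ (a ⊕ b) ≃ (a ⊕ a') ⊕ b :=
    (Equiv.sumAssoc a' a b).symm.trans (Equiv.sumCongr (Equiv.sumComm a' a) (Equiv.refl b))
      with hσ
  have hQtdet : Qt.det =
      (Matrix.fromBlocks (A⁻¹.submatrix Sum.inl Sum.inl) ((-(A⁻¹ * U)).submatrix Sum.inl id)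
        ((V * A⁻¹).submatrix id Sum.inl) (L - V * A⁻¹ * U)).det := by
    have h11 : (Qt.submatrix σ σ).toBlocks₁₁ = 1 := by
      ext i j
      simp [Matrix.toBlocks₁₁, hQt, hσ, Matrix.one_apply, Equiv.sumAssoc, Equiv.sumCongr,
        Equiv.sumComm]
    have h12 : (Qt.submatrix σ σ).toBlocks₁₂ = 0 := by
      ext i j
      rcases j with t | t <;>
        simp [Matrix.toBlocks₁₂, hQt, hσ, Matrix.one_apply, Equiv.sumAssoc, Equiv.sumCongr,
          Equiv.sumComm]
    have h22 : (Qt.submatrix σ σ).toBlocks₂₂ =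
        Matrix.fromBlocks (A⁻¹.submatrix Sum.inl Sum.inl) ((-(A⁻¹ * U)).submatrix Sum.inl id)
          ((V * A⁻¹).submatrix id Sum.inl) (L - V * A⁻¹ * U) := by
      ext i j
      rcases i with s | s <;> rcases j with t | t <;>
        simp [Matrix.toBlocks₂₂, hQt, hQ, hσ, Equiv.sumAssoc, Equiv.sumCongr, Equiv.sumComm,
          Matrix.fromBlocks]
    calc Qt.det = (Qt.submatrix σ σ).det := (Matrix.det_submatrix_equiv_self σ Qt).symm
      _ = (Matrix.fromBlocks (Qt.submatrix σ σ).toBlocks₁₁ (Qt.submatrix σ σ).toBlocks₁₂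
            (Qt.submatrix σ σ).toBlocks₂₁ (Qt.submatrix σ σ).toBlocks₂₂).det := by
          rw [Matrix.fromBlocks_toBlocks]
      _ = _ := by
          rw [h11, h12, h22, Matrix.det_fromBlocks_zero₁₂, Matrix.det_one, one_mul]
  set τ : a ⊕ (a' ⊕ b) ≃ (a ⊕ a') ⊕ b := (Equiv.sumAssoc a a' b).symm with hτ
  have hR0det : R0.det =
      (Matrix.fromBlocks (A.submatrix Sum.inr Sum.inr) (U.submatrix Sum.inr id)
        (V.submatrix id Sum.inr) L).det := by
    have h11 : (R0.submatrix τ τ).toBlocks₁₁ = 1 := by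
      ext i j
      simp [Matrix.toBlocks₁₁, hR0, hT0, hτ, Matrix.one_apply, Equiv.sumAssoc,
        Matrix.fromBlocks]
    have h12 : (R0.submatrix τ τ).toBlocks₁₂ = 0 := by
      ext i j
      rcases j with t | t <;>
        simp [Matrix.toBlocks₁₂, hR0, hT0, hτ, Matrix.one_apply, Equiv.sumAssoc,
          Matrix.fromBlocks]
    have h22 : (R0.submatrix τ τ).toBlocks₂₂ =
        Matrix.fromBlocks (A.submatrix Sum.inr Sum.inr) (U.submatrix Sum.inr id)
          (V.submatrix id Sum.inr) L := by
      ext i j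
      rcases i with s | s <;> rcases j with t | t <;>
        simp [Matrix.toBlocks₂₂, hR0, hS0, hT0, hτ, Equiv.sumAssoc, Matrix.fromBlocks]
    calc R0.det = (R0.submatrix τ τ).det := (Matrix.det_submatrix_equiv_self τ R0).symm
      _ = (Matrix.fromBlocks (R0.submatrix τ τ).toBlocks₁₁ (R0.submatrix τ τ).toBlocks₁₂
            (R0.submatrix τ τ).toBlocks₂₁ (R0.submatrix τ τ).toBlocks₂₂).det := by
          rw [Matrix.fromBlocks_toBlocks]
      _ = _ := by
          rw [h11, h12, h22, Matrix.det_fromBlocks_zero₁₂, Matrix.det_one, one_mul]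
  have hS0det : S0.det = A.det := by
    rw [hS0, Matrix.det_fromBlocks_zero₂₁, Matrix.det_one, mul_one]
  calc (Matrix.fromBlocks (A⁻¹.submatrix Sum.inl Sum.inl) ((-(A⁻¹ * U)).submatrix Sum.inl id)
      ((V * A⁻¹).submatrix id Sum.inl) (L - V * A⁻¹ * U)).det * A.det
      = Qt.det * S0.det := by rw [hQtdet, hS0det]
    _ = (Qt * S0).det := (Matrix.det_mul _ _).symm
    _ = R0.det := by rw [hQtS]
    _ = _ := hR0det

/-- the principal pivot transform of a P-matrix is a P-matrix. -/
theorem stmt_13 {k l : Type*} [Fintype k] [Fintype l] [DecidableEq k] [DecidableEq l]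
    (A11 : Matrix k k ℂ) (A12 : Matrix k l ℂ) (A21 : Matrix l k ℂ) (A22 : Matrix l l ℂ)
    (hA : IsPMatrix (Matrix.fromBlocks A11 A12 A21 A22)) :
    IsPMatrix (Matrix.fromBlocks A11⁻¹ (-(A11⁻¹ * A12)) (A21 * A11⁻¹)
      (A22 - A21 * A11⁻¹ * A12)) := by
  classical
  intro γ hγ
  set N : Matrix (k ⊕ l) (k ⊕ l) ℂ := Matrix.fromBlocks A11 A12 A21 A22 with hN
  -- step 1 : A11.det is a positive real
  have hA11 : ∃ r0 : ℝ, 0 < r0 ∧ A11.det = (r0 : ℂ) := by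
    rcases isEmpty_or_nonempty k with hk | hk
    · exact ⟨1, one_pos, by simp [Matrix.det_isEmpty]⟩
    · set δ0 : Finset (k ⊕ l) := Finset.univ.image (Sum.inl : k → k ⊕ l) with hδ0
      obtain ⟨r0, hr0, hdet⟩ := hA δ0 (Finset.Nonempty.image Finset.univ_nonempty _)
      refine ⟨r0, hr0, ?_⟩
      let e0 : k ≃ {x // x ∈ δ0} :=
        { toFun := fun i => ⟨.inl i, by simp [hδ0]⟩
          invFun := fun x => match x with
            | ⟨.inl i, _⟩ => i
            | ⟨.inr j, hj⟩ => absurd hj (by simp [hδ0])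
          left_inv := fun i => rfl
          right_inv := by rintro ⟨i | j, h⟩
                          · rfl
                          · exact absurd h (by simp [hδ0]) }
      have hsub : (N.submatrix (fun i : {x // x ∈ δ0} => (i : k ⊕ l))
          (fun i : {x // x ∈ δ0} => (i : k ⊕ l))).submatrix e0 e0 = A11 := by
        ext i j; rfl
      rw [← hdet, ← Matrix.det_submatrix_equiv_self e0, hsub]
  obtain ⟨r0, hr0pos, hr0⟩ := hA11
  have hr0ne : (r0 : ℂ) ≠ 0 := by
    exact_mod_cast (ne_of_gt (by exact_mod_cast hr0pos : (0:ℝ) < r0))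
  have hunit : IsUnit A11.det := by rw [hr0]; exact isUnit_iff_ne_zero.2 hr0ne
  -- step 2 : the complementary principal minor of N is a positive real
  set δ : Finset (k ⊕ l) :=
    (Finset.univ.filter fun i : k => (Sum.inl i : k ⊕ l) ∉ γ).image Sum.inl ∪
    (Finset.univ.filter fun j : l => (Sum.inr j : k ⊕ l) ∈ γ).image Sum.inr with hδ
  have hδl : ∀ i : k, ((Sum.inl i : k ⊕ l) ∈ δ ↔ (Sum.inl i : k ⊕ l) ∉ γ) := by
    intro i; simp [hδ]
  have hδr : ∀ j : l, ((Sum.inr j : k ⊕ l) ∈ δ ↔ (Sum.inr j : k ⊕ l) ∈ γ) := by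
    intro j; simp [hδ]
  have hAδ : ∃ rδ : ℝ, 0 < rδ ∧
      (Matrix.fromBlocks
        (A11.submatrix (fun s : {i : k // (Sum.inl i : k ⊕ l) ∉ γ} => s.1)
          (fun s : {i : k // (Sum.inl i : k ⊕ l) ∉ γ} => s.1))
        (A12.submatrix (fun s : {i : k // (Sum.inl i : k ⊕ l) ∉ γ} => s.1)
          (fun t : {j : l // (Sum.inr j : k ⊕ l) ∈ γ} => t.1))
        (A21.submatrix (fun t : {j : l // (Sum.inr j : k ⊕ l) ∈ γ} => t.1)
          (fun s : {i : k // (Sum.inl i : k ⊕ l) ∉ γ} => s.1))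
        (A22.submatrix (fun t : {j : l // (Sum.inr j : k ⊕ l) ∈ γ} => t.1)
          (fun t : {j : l // (Sum.inr j : k ⊕ l) ∈ γ} => t.1))).det = (rδ : ℂ) := by
    rcases Finset.eq_empty_or_nonempty δ with hem | hne
    · haveI h1 : IsEmpty {i : k // (Sum.inl i : k ⊕ l) ∉ γ} :=
        ⟨fun s => by have := (hδl s.1).2 s.2; rw [hem] at this; simp at this⟩
      haveI h2 : IsEmpty {j : l // (Sum.inr j : k ⊕ l) ∈ γ} :=
        ⟨fun t => by have := (hδr t.1).2 t.2; rw [hem] at this; simp at this⟩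
      exact ⟨1, one_pos, by simp [Matrix.det_isEmpty]⟩
    · obtain ⟨rδ, hpos, hdet⟩ := hA δ hne
      refine ⟨rδ, hpos, ?_⟩
      let eδ : {i : k // (Sum.inl i : k ⊕ l) ∉ γ} ⊕ {j : l // (Sum.inr j : k ⊕ l) ∈ γ}
          ≃ {x // x ∈ δ} :=
        { toFun := Sum.elim (fun s => ⟨.inl s.1, (hδl s.1).2 s.2⟩)
            (fun t => ⟨.inr t.1, (hδr t.1).2 t.2⟩)
          invFun := fun x => match x with
            | ⟨.inl i, h⟩ => .inl ⟨i, (hδl i).1 h⟩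
            | ⟨.inr j, h⟩ => .inr ⟨j, (hδr j).1 h⟩
          left_inv := by rintro (s | t) <;> rfl
          right_inv := by rintro ⟨i | j, h⟩ <;> rfl }
      have hsub : (N.submatrix (fun x : {x // x ∈ δ} => (x : k ⊕ l))
          (fun x : {x // x ∈ δ} => (x : k ⊕ l))).submatrix eδ eδ =
          Matrix.fromBlocks
            (A11.submatrix (fun s : {i : k // (Sum.inl i : k ⊕ l) ∉ γ} => s.1)
              (fun s : {i : k // (Sum.inl i : k ⊕ l) ∉ γ} => s.1))
            (A12.submatrix (fun s : {i : k // (Sum.inl i : k ⊕ l) ∉ γ} => s.1)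
              (fun t : {j : l // (Sum.inr j : k ⊕ l) ∈ γ} => t.1))
            (A21.submatrix (fun t : {j : l // (Sum.inr j : k ⊕ l) ∈ γ} => t.1)
              (fun s : {i : k // (Sum.inl i : k ⊕ l) ∉ γ} => s.1))
            (A22.submatrix (fun t : {j : l // (Sum.inr j : k ⊕ l) ∈ γ} => t.1)
              (fun t : {j : l // (Sum.inr j : k ⊕ l) ∈ γ} => t.1)) := by
        ext x y
        rcases x with s | t <;> rcases y with s' | t' <;> rfl
      rw [← hsub, Matrix.det_submatrix_equiv_self, hdet]
  obtain ⟨rδ, hrδpos, hrδ⟩ := hAδ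
  -- step 3 : transport along equivalences and apply the key identity
  set e2 : {i : k // (Sum.inl i : k ⊕ l) ∈ γ} ⊕ {i : k // ¬(Sum.inl i : k ⊕ l) ∈ γ} ≃ k :=
    Equiv.sumCompl _ with he2
  let e1 : {x // x ∈ γ} ≃
      {i : k // (Sum.inl i : k ⊕ l) ∈ γ} ⊕ {j : l // (Sum.inr j : k ⊕ l) ∈ γ} :=
    { toFun := fun x => match x with
        | ⟨.inl i, h⟩ => .inl ⟨i, h⟩
        | ⟨.inr j, h⟩ => .inr ⟨j, h⟩
      invFun := Sum.elim (fun s => ⟨.inl s.1, s.2⟩) (fun t => ⟨.inr t.1, t.2⟩)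
      left_inv := by rintro ⟨i | j, h⟩ <;> rfl
      right_inv := by rintro (s | t) <;> rfl }
  set AA := A11.submatrix ⇑e2 ⇑e2 with hAA
  set UU := A12.submatrix ⇑e2
    (fun t : {j : l // (Sum.inr j : k ⊕ l) ∈ γ} => t.1) with hUU
  set VV := A21.submatrix (fun t : {j : l // (Sum.inr j : k ⊕ l) ∈ γ} => t.1) ⇑e2 with hVV
  set LL := A22.submatrix (fun t : {j : l // (Sum.inr j : k ⊕ l) ∈ γ} => t.1)
    (fun t : {j : l // (Sum.inr j : k ⊕ l) ∈ γ} => t.1) with hLL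
  have hAAinv : AA⁻¹ = A11⁻¹.submatrix ⇑e2 ⇑e2 := by
    have h : AA = Matrix.reindex e2.symm e2.symm A11 := by
      rw [Matrix.reindex_apply, Equiv.symm_symm]
    rw [h, Matrix.inv_reindex, Matrix.reindex_apply, Equiv.symm_symm]
  have hAAdet : AA.det = A11.det := Matrix.det_submatrix_equiv_self e2 A11
  have hunit' : IsUnit AA.det := by rw [hAAdet]; exact hunit
  have key := ppt_key AA UU VV LL hunit'
  have h1 : AA⁻¹ * UU = (A11⁻¹ * A12).submatrix ⇑e2
      (fun t : {j : l // (Sum.inr j : k ⊕ l) ∈ γ} => t.1) := by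
    rw [hAAinv, hUU, Matrix.submatrix_mul_equiv]
  have h2 : VV * AA⁻¹ = (A21 * A11⁻¹).submatrix
      (fun t : {j : l // (Sum.inr j : k ⊕ l) ∈ γ} => t.1) ⇑e2 := by
    rw [hAAinv, hVV, Matrix.submatrix_mul_equiv]
  have h3 : VV * AA⁻¹ * UU = (A21 * A11⁻¹ * A12).submatrix
      (fun t : {j : l // (Sum.inr j : k ⊕ l) ∈ γ} => t.1)
      (fun t : {j : l // (Sum.inr j : k ⊕ l) ∈ γ} => t.1) := by
    rw [h2, hUU, Matrix.submatrix_mul_equiv]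
  set P : Matrix (k ⊕ l) (k ⊕ l) ℂ := Matrix.fromBlocks A11⁻¹ (-(A11⁻¹ * A12)) (A21 * A11⁻¹)
      (A22 - A21 * A11⁻¹ * A12) with hP
  have hgoalmat : (P.submatrix (fun x : {x // x ∈ γ} => (x : k ⊕ l))
      (fun x : {x // x ∈ γ} => (x : k ⊕ l))).submatrix e1.symm e1.symm
      = Matrix.fromBlocks (AA⁻¹.submatrix Sum.inl Sum.inl) ((-(AA⁻¹ * UU)).submatrix Sum.inl id)
        ((VV * AA⁻¹).submatrix id Sum.inl) (LL - VV * AA⁻¹ * UU) := by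
    rw [h3, h1, h2, hAAinv, hLL]
    ext x y
    rcases x with s | t <;> rcases y with s' | t' <;> rfl
  have hrhs : Matrix.fromBlocks (AA.submatrix Sum.inr Sum.inr) (UU.submatrix Sum.inr id)
      (VV.submatrix id Sum.inr) LL
      = Matrix.fromBlocks
        (A11.submatrix (fun s : {i : k // (Sum.inl i : k ⊕ l) ∉ γ} => s.1)
          (fun s : {i : k // (Sum.inl i : k ⊕ l) ∉ γ} => s.1))
        (A12.submatrix (fun s : {i : k // (Sum.inl i : k ⊕ l) ∉ γ} => s.1)
          (fun t : {j : l // (Sum.inr j : k ⊕ l) ∈ γ} => t.1))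
        (A21.submatrix (fun t : {j : l // (Sum.inr j : k ⊕ l) ∈ γ} => t.1)
          (fun s : {i : k // (Sum.inl i : k ⊕ l) ∉ γ} => s.1))
        (A22.submatrix (fun t : {j : l // (Sum.inr j : k ⊕ l) ∈ γ} => t.1)
          (fun t : {j : l // (Sum.inr j : k ⊕ l) ∈ γ} => t.1)) := by
    ext x y
    rcases x with s | t <;> rcases y with s' | t' <;> rfl
  have hdetγ : (P.submatrix (fun x : {x // x ∈ γ} => (x : k ⊕ l))
      (fun x : {x // x ∈ γ} => (x : k ⊕ l))).det * (r0 : ℂ) = (rδ : ℂ) := by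
    calc (P.submatrix (fun x : {x // x ∈ γ} => (x : k ⊕ l))
        (fun x : {x // x ∈ γ} => (x : k ⊕ l))).det * (r0 : ℂ)
        = ((P.submatrix (fun x : {x // x ∈ γ} => (x : k ⊕ l))
            (fun x : {x // x ∈ γ} => (x : k ⊕ l))).submatrix e1.symm e1.symm).det * (r0 : ℂ) := by
          rw [Matrix.det_submatrix_equiv_self]
      _ = (Matrix.fromBlocks (AA⁻¹.submatrix Sum.inl Sum.inl)
            ((-(AA⁻¹ * UU)).submatrix Sum.inl id)
            ((VV * AA⁻¹).submatrix id Sum.inl) (LL - VV * AA⁻¹ * UU)).det * AA.det := by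
          rw [hgoalmat, hAAdet, hr0]
      _ = (Matrix.fromBlocks (AA.submatrix Sum.inr Sum.inr) (UU.submatrix Sum.inr id)
            (VV.submatrix id Sum.inr) LL).det := key
      _ = (rδ : ℂ) := by rw [hrhs, hrδ]
  refine ⟨rδ / r0, div_pos hrδpos hr0pos, ?_⟩
  rw [hP] at hdetγ
  push_cast
  rw [eq_div_iff hr0ne]
  exact hdetγ
end

section
/- Let A ∈ M_n(ℝ) be a semipositive matrix (there exists an entrywise positive x with Ax entrywise positive) written in block form with A11 invertible, and suppose ppt(A) is defined. If there exists x > 0 (entrywise) with Ax > 0 (entrywise), then there exists u > 0 with ppt(A)·u > 0; that is, the principal pivot transform of an S-matrix is an S-matrix. -/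
/-- the principal pivot transform of a semipositive (S-)matrix is
semipositive. -/
theorem stmt_15 {k l : Type*} [Fintype k] [Fintype l] [DecidableEq k] [DecidableEq l]
    (A11 : Matrix k k ℝ) (A12 : Matrix k l ℝ) (A21 : Matrix l k ℝ) (A22 : Matrix l l ℝ)
    (h : IsUnit A11.det)
    (x : (k ⊕ l) → ℝ) (hx : ∀ i, 0 < x i)
    (hAx : ∀ i, 0 < (Matrix.fromBlocks A11 A12 A21 A22).mulVec x i) :
    ∃ u : (k ⊕ l) → ℝ, (∀ i, 0 < u i) ∧
      ∀ i, 0 < (Matrix.fromBlocks A11⁻¹ (-(A11⁻¹ * A12)) (A21 * A11⁻¹)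
        (A22 - A21 * A11⁻¹ * A12)).mulVec u i := by
  set x1 : k → ℝ := x ∘ Sum.inl with hx1
  set x2 : l → ℝ := x ∘ Sum.inr with hx2
  have hxe : x = Sum.elim x1 x2 := by ext i; cases i <;> rfl
  have hinv : A11⁻¹ * A11 = 1 := Matrix.nonsing_inv_mul A11 h
  refine ⟨Sum.elim (A11.mulVec x1 + A12.mulVec x2) x2, ?_, ?_⟩
  · intro i
    cases i with
    | inl i =>
      have := hAx (Sum.inl i)
      rwa [hxe, Matrix.fromBlocks_mulVec] at this
    | inr j => exact hx (Sum.inr j)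
  · intro i
    rw [Matrix.fromBlocks_mulVec]
    simp only [Sum.elim_comp_inl, Sum.elim_comp_inr]
    cases i with
    | inl i =>
      have key : A11⁻¹.mulVec (A11.mulVec x1 + A12.mulVec x2)
          + (-(A11⁻¹ * A12)).mulVec x2 = x1 := by
        rw [Matrix.mulVec_add, Matrix.neg_mulVec, Matrix.mulVec_mulVec,
          Matrix.mulVec_mulVec, hinv, Matrix.one_mulVec, ← Matrix.mulVec_mulVec]
        abel
      rw [key]
      exact hx (Sum.inl i)
    | inr j =>
      have key : (A21 * A11⁻¹).mulVec (A11.mulVec x1 + A12.mulVec x2)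
          + (A22 - A21 * A11⁻¹ * A12).mulVec x2
          = A21.mulVec x1 + A22.mulVec x2 := by
        rw [Matrix.mulVec_add, Matrix.mulVec_mulVec, Matrix.mulVec_mulVec,
          Matrix.mul_assoc, hinv, Matrix.mul_one, Matrix.sub_mulVec]
        abel
      rw [key]
      have := hAx (Sum.inr j)
      rw [hxe, Matrix.fromBlocks_mulVec] at this
      simpa using this
end

section
/- Let S = diag(I_k, −I_{n−k}) be a signature matrix and let R ∈ M_n(ℝ) be an orthogonal matrix whose leading k×k principal submatrix R11 is invertible. Then Q = ppt(R) (the principal pivot transform relative to the leading k×k block) satisfies QᵀSQ = S, i.e., Q is S-orthogonal. -/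
open Matrix

/-- the principal pivot transform of an orthogonal matrix (with
invertible leading block) is S-orthogonal for `S = diag(I, -I)`. -/
theorem stmt_16 {k l : Type*} [Fintype k] [Fintype l] [DecidableEq k] [DecidableEq l]
    (R11 : Matrix k k ℝ) (R12 : Matrix k l ℝ) (R21 : Matrix l k ℝ) (R22 : Matrix l l ℝ)
    (horth : (Matrix.fromBlocks R11 R12 R21 R22)ᵀ * Matrix.fromBlocks R11 R12 R21 R22 = 1)
    (h : IsUnit R11.det) :
    (Matrix.fromBlocks R11⁻¹ (-(R11⁻¹ * R12)) (R21 * R11⁻¹)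
        (R22 - R21 * R11⁻¹ * R12))ᵀ *
      Matrix.fromBlocks (1 : Matrix k k ℝ) 0 0 (-1 : Matrix l l ℝ) *
      Matrix.fromBlocks R11⁻¹ (-(R11⁻¹ * R12)) (R21 * R11⁻¹)
        (R22 - R21 * R11⁻¹ * R12)
      = Matrix.fromBlocks (1 : Matrix k k ℝ) 0 0 (-1 : Matrix l l ℝ) := by
  rw [fromBlocks_transpose, fromBlocks_multiply, ← fromBlocks_one,
    fromBlocks_inj] at horth
  obtain ⟨e11, e12, e21, e22⟩ := horth
  have hA : R11⁻¹ * R11 = 1 := nonsing_inv_mul _ h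
  have hB : R11 * R11⁻¹ = 1 := mul_nonsing_inv _ h
  have hAT : R11⁻¹ᵀ * R11ᵀ = 1 := by rw [← transpose_mul, hB, transpose_one]
  have hTA : R11ᵀ * R11⁻¹ᵀ = 1 := by rw [← transpose_mul, hA, transpose_one]
  have h2121 : R21ᵀ * R21 = 1 - R11ᵀ * R11 := eq_sub_of_add_eq' e11
  have h2122 : R21ᵀ * R22 = -(R11ᵀ * R12) := eq_neg_of_add_eq_zero_right e12
  have h2221 : R22ᵀ * R21 = -(R12ᵀ * R11) := eq_neg_of_add_eq_zero_right e21
  have h2222 : R22ᵀ * R22 = 1 - R12ᵀ * R12 := eq_sub_of_add_eq' e22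
  have p1k : ∀ (X : Matrix k k ℝ), R21ᵀ * (R21 * X) = X - R11ᵀ * (R11 * X) := by
    intro X
    rw [← Matrix.mul_assoc, h2121, Matrix.sub_mul, Matrix.one_mul, Matrix.mul_assoc]
  have p1l : ∀ (X : Matrix k l ℝ), R21ᵀ * (R21 * X) = X - R11ᵀ * (R11 * X) := by
    intro X
    rw [← Matrix.mul_assoc, h2121, Matrix.sub_mul, Matrix.one_mul, Matrix.mul_assoc]
  have p2k : ∀ (X : Matrix l k ℝ), R21ᵀ * (R22 * X) = -(R11ᵀ * (R12 * X)) := by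
    intro X
    rw [← Matrix.mul_assoc, h2122, Matrix.neg_mul, Matrix.mul_assoc]
  have p2l : ∀ (X : Matrix l l ℝ), R21ᵀ * (R22 * X) = -(R11ᵀ * (R12 * X)) := by
    intro X
    rw [← Matrix.mul_assoc, h2122, Matrix.neg_mul, Matrix.mul_assoc]
  have p3k : ∀ (X : Matrix k k ℝ), R22ᵀ * (R21 * X) = -(R12ᵀ * (R11 * X)) := by
    intro X
    rw [← Matrix.mul_assoc, h2221, Matrix.neg_mul, Matrix.mul_assoc]
  have p3l : ∀ (X : Matrix k l ℝ), R22ᵀ * (R21 * X) = -(R12ᵀ * (R11 * X)) := by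
    intro X
    rw [← Matrix.mul_assoc, h2221, Matrix.neg_mul, Matrix.mul_assoc]
  have p4k : ∀ (X : Matrix l k ℝ), R22ᵀ * (R22 * X) = X - R12ᵀ * (R12 * X) := by
    intro X
    rw [← Matrix.mul_assoc, h2222, Matrix.sub_mul, Matrix.one_mul, Matrix.mul_assoc]
  have p4l : ∀ (X : Matrix l l ℝ), R22ᵀ * (R22 * X) = X - R12ᵀ * (R12 * X) := by
    intro X
    rw [← Matrix.mul_assoc, h2222, Matrix.sub_mul, Matrix.one_mul, Matrix.mul_assoc]
  have q1k : ∀ (X : Matrix k k ℝ), R11⁻¹ * (R11 * X) = X := by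
    intro X
    rw [← Matrix.mul_assoc, hA, Matrix.one_mul]
  have q1l : ∀ (X : Matrix k l ℝ), R11⁻¹ * (R11 * X) = X := by
    intro X
    rw [← Matrix.mul_assoc, hA, Matrix.one_mul]
  have q2k : ∀ (X : Matrix k k ℝ), R11 * (R11⁻¹ * X) = X := by
    intro X
    rw [← Matrix.mul_assoc, hB, Matrix.one_mul]
  have q2l : ∀ (X : Matrix k l ℝ), R11 * (R11⁻¹ * X) = X := by
    intro X
    rw [← Matrix.mul_assoc, hB, Matrix.one_mul]
  have q3k : ∀ (X : Matrix k k ℝ), R11⁻¹ᵀ * (R11ᵀ * X) = X := by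
    intro X
    rw [← Matrix.mul_assoc, hAT, Matrix.one_mul]
  have q3l : ∀ (X : Matrix k l ℝ), R11⁻¹ᵀ * (R11ᵀ * X) = X := by
    intro X
    rw [← Matrix.mul_assoc, hAT, Matrix.one_mul]
  have q4k : ∀ (X : Matrix k k ℝ), R11ᵀ * (R11⁻¹ᵀ * X) = X := by
    intro X
    rw [← Matrix.mul_assoc, hTA, Matrix.one_mul]
  have q4l : ∀ (X : Matrix k l ℝ), R11ᵀ * (R11⁻¹ᵀ * X) = X := by
    intro X
    rw [← Matrix.mul_assoc, hTA, Matrix.one_mul]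
  rw [fromBlocks_transpose, fromBlocks_multiply, fromBlocks_multiply, fromBlocks_inj]
  refine ⟨?_, ?_, ?_, ?_⟩ <;>
    simp only [transpose_mul, transpose_neg, transpose_sub, Matrix.neg_mul, Matrix.mul_neg,
      Matrix.sub_mul, Matrix.mul_sub, Matrix.add_mul, Matrix.mul_add, Matrix.mul_assoc,
      Matrix.mul_one, Matrix.one_mul, Matrix.mul_zero, Matrix.zero_mul, add_zero,
      zero_add, neg_neg, p1k, p1l, p2k, p2l, p3k, p3l, p4k, p4l, q1k, q1l, q2k, q2l, q3k, q3l, q4k, q4l, h2121, h2122, h2221, h2222,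
      hA, hB, hAT, hTA, sub_self] <;>
    abel
end

section
/- Let T ∈ M_n(ℂ) be in block form with T11 invertible, and let T̂ = ppt(T). Given c ∈ ℂⁿ, define u by u_i = c_i for i in the pivot block and u_i = 0 otherwise, and set d = c − (I + T̂)u. Then for any x ∈ ℂⁿ, x = Tx + c if and only if x = T̂x + d. -/
open Matrix


/-- `x = Tx + c` iff `x = T̂x + d`, where `T̂ = ppt(T)`,
`u` agrees with `c` on the pivot block and vanishes elsewhere, and
`d = c - (I + T̂)u`. -/
theorem stmt_17 {k l : Type*} [Fintype k] [Fintype l] [DecidableEq k] [DecidableEq l]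
    (T11 : Matrix k k ℂ) (T12 : Matrix k l ℂ) (T21 : Matrix l k ℂ) (T22 : Matrix l l ℂ)
    (h : IsUnit T11.det) (x c : (k ⊕ l) → ℂ) :
    x = (Matrix.fromBlocks T11 T12 T21 T22).mulVec x + c ↔
    x = (Matrix.fromBlocks T11⁻¹ (-(T11⁻¹ * T12)) (T21 * T11⁻¹)
          (T22 - T21 * T11⁻¹ * T12)).mulVec x +
        (c - ((1 : Matrix (k ⊕ l) (k ⊕ l) ℂ) +
            Matrix.fromBlocks T11⁻¹ (-(T11⁻¹ * T12)) (T21 * T11⁻¹)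
              (T22 - T21 * T11⁻¹ * T12)).mulVec
          (Sum.elim (fun i => c (Sum.inl i)) (fun _ => 0))) := by
  have hinv : T11⁻¹ * T11 = 1 := Matrix.nonsing_inv_mul _ h
  have hinv' : T11 * T11⁻¹ = 1 := Matrix.mul_nonsing_inv _ h
  obtain ⟨x1, x2, rfl⟩ : ∃ a b, x = Sum.elim a b :=
    ⟨x ∘ Sum.inl, x ∘ Sum.inr, by ext (i|j) <;> rfl⟩
  obtain ⟨c1, c2, rfl⟩ : ∃ a b, c = Sum.elim a b :=
    ⟨c ∘ Sum.inl, c ∘ Sum.inr, by ext (i|j) <;> rfl⟩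
  have key : ∀ (y1 d1 : k → ℂ) (y2 d2 : l → ℂ),
      (Sum.elim y1 y2 = Sum.elim d1 d2) ↔ (y1 = d1 ∧ y2 = d2) := by
    intro y1 d1 y2 d2
    constructor
    · intro hh
      exact ⟨funext fun i => congrFun hh (Sum.inl i), funext fun j => congrFun hh (Sum.inr j)⟩
    · rintro ⟨rfl, rfl⟩; rfl
  have hadd : ∀ (a c' : k → ℂ) (b d : l → ℂ),
      Sum.elim a b + Sum.elim c' d = Sum.elim (a + c') (b + d) := by
    intro a c' b d; ext (i|j) <;> rfl
  have hsub : ∀ (a c' : k → ℂ) (b d : l → ℂ),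
      Sum.elim a b - Sum.elim c' d = Sum.elim (a - c') (b - d) := by
    intro a c' b d; ext (i|j) <;> rfl
  have hu : (Sum.elim (fun i => Sum.elim c1 c2 (Sum.inl i)) (fun _ : l => (0:ℂ))) =
      Sum.elim c1 (0 : l → ℂ) := by
    ext (i|j) <;> simp
  rw [hu]
  simp only [Matrix.fromBlocks_mulVec, Matrix.add_mulVec, Matrix.one_mulVec,
    Matrix.mulVec_zero, add_zero, Sum.elim_comp_inl, Sum.elim_comp_inr, hadd, hsub, key]
  constructor
  · rintro ⟨h1, h2⟩
    have e1 : x1 - T12 *ᵥ x2 - c1 = T11 *ᵥ x1 := by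
      conv_lhs => rw [h1]
      abel
    constructor
    · calc x1 = T11⁻¹ *ᵥ (T11 *ᵥ x1) := by
            rw [Matrix.mulVec_mulVec, hinv, Matrix.one_mulVec]
        _ = T11⁻¹ *ᵥ (x1 - T12 *ᵥ x2 - c1) := by rw [e1]
        _ = T11⁻¹ *ᵥ x1 + (-(T11⁻¹ * T12)) *ᵥ x2 + (c1 - (c1 + T11⁻¹ *ᵥ c1)) := by
            simp only [Matrix.mulVec_sub, Matrix.neg_mulVec, ← Matrix.mulVec_mulVec]
            abel
    · calc x2 = T21 *ᵥ x1 + T22 *ᵥ x2 + c2 := h2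
        _ = (T21 * T11⁻¹) *ᵥ (T11 *ᵥ x1) + T22 *ᵥ x2 + c2 := by
            rw [Matrix.mulVec_mulVec, Matrix.mul_assoc, hinv, Matrix.mul_one]
        _ = (T21 * T11⁻¹) *ᵥ (x1 - T12 *ᵥ x2 - c1) + T22 *ᵥ x2 + c2 := by rw [e1]
        _ = (T21 * T11⁻¹) *ᵥ x1 + (T22 - T21 * T11⁻¹ * T12) *ᵥ x2 +
              (c2 - (0 + (T21 * T11⁻¹) *ᵥ c1)) := by
            simp only [Matrix.mulVec_sub, Matrix.sub_mulVec, Matrix.mulVec_mulVec, zero_add]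
            abel
  · rintro ⟨h1, h2⟩
    have f1 : T11⁻¹ *ᵥ (x1 - T12 *ᵥ x2 - c1) = x1 := by
      conv_rhs => rw [h1]
      simp only [Matrix.mulVec_sub, Matrix.neg_mulVec, ← Matrix.mulVec_mulVec]
      abel
    have e1 : x1 - T12 *ᵥ x2 - c1 = T11 *ᵥ x1 := by
      calc x1 - T12 *ᵥ x2 - c1
          = T11 *ᵥ (T11⁻¹ *ᵥ (x1 - T12 *ᵥ x2 - c1)) := by
            rw [Matrix.mulVec_mulVec, hinv', Matrix.one_mulVec]
        _ = T11 *ᵥ x1 := by rw [f1]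
    constructor
    · rw [← e1]; abel
    · calc x2 = (T21 * T11⁻¹) *ᵥ x1 + (T22 - T21 * T11⁻¹ * T12) *ᵥ x2 +
              (c2 - (0 + (T21 * T11⁻¹) *ᵥ c1)) := h2
        _ = (T21 * T11⁻¹) *ᵥ (x1 - T12 *ᵥ x2 - c1) + T22 *ᵥ x2 + c2 := by
            simp only [Matrix.mulVec_sub, Matrix.sub_mulVec, Matrix.mulVec_mulVec, zero_add]
            abel
        _ = (T21 * T11⁻¹) *ᵥ (T11 *ᵥ x1) + T22 *ᵥ x2 + c2 := by rw [e1]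
        _ = T21 *ᵥ x1 + T22 *ᵥ x2 + c2 := by
            rw [Matrix.mulVec_mulVec, Matrix.mul_assoc, hinv, Matrix.mul_one]
end
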